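/- Fix r ∈ ℕ. Then m([2]^d, r) ≤ (1+o(1))·(1/r)·C(d, r−1) as d → ∞; that is, for every ε > 0 there exists d₀ such that for all d ≥ d₀, m([2]^d, r) ≤ (1+ε)·(1/r)·C(d, r−1). -/

import Mathlib

/-- Adjacency in the grid graph `[n]^d`: two vertices are adjacent iff they differ
by exactly 1 in a single coordinate. -/
def gridAdj (n d : ℕ) (x y : Fin d → Fin n) : Prop :=
  ∃ i, ((x i : ℕ) + 1 = (y i : ℕ) ∨ (y i : ℕ) + 1 = (x i : ℕ)) ∧ ∀ j, j ≠ i → x j = y j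

/-- The grid graph `[n]^d`. -/
def gridGraph (n d : ℕ) : SimpleGraph (Fin d → Fin n) where
  Adj := gridAdj n d
  symm := by
    constructor
    rintro x y ⟨i, h1, h2⟩
    exact ⟨i, h1.symm, fun j hj => (h2 j hj).symm⟩
  loopless := by
    constructor
    rintro x ⟨i, h1, -⟩
    omega

/-- Graph distance from a vertex to a set in the grid graph. -/
noncomputable def gridSetDist (n d : ℕ) (x : Fin d → Fin n) (S : Set (Fin d → Fin n)) : ℕ :=
  sInf (Set.image (fun y => (gridGraph n d).dist x y) S)

/-- One step of `r`-neighbour bootstrap percolation. -/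
def bootStep {V : Type*} (adj : V → V → Prop) (r : ℕ) (A : Set V) : Set V :=
  A ∪ {v | r ≤ {u | adj v u ∧ u ∈ A}.ncard}

/-- The closure `[A]` of a set under `r`-neighbour bootstrap percolation. -/
def bootClosure {V : Type*} (adj : V → V → Prop) (r : ℕ) (A : Set V) : Set V :=
  ⋃ t, (bootStep adj r)^[t] A

/-- The dimension of a cube in `[n]^d`: the sum over coordinates of
(number of values taken in that coordinate minus one). -/
noncomputable def cubeDim {n d : ℕ} (Q : Set (Fin d → Fin n)) : ℕ :=
  ∑ i : Fin d, ((Set.image (fun x => x i) Q).ncard - 1)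

/-- A cube in `[n]^d` is a (nonempty) product of integer intervals. -/
def IsCube {n d : ℕ} (Q : Set (Fin d → Fin n)) : Prop :=
  ∃ lo hi : Fin d → Fin n, (∀ i, lo i ≤ hi i) ∧
    Q = {x | ∀ i, lo i ≤ x i ∧ x i ≤ hi i}

/-- A hypercube in `[n]^d` is a cube all of whose sides have length 1 or 2,
i.e. a copy of some `[2]^m`. -/
def IsHypercube {n d : ℕ} (Q : Set (Fin d → Fin n)) : Prop :=
  ∃ lo hi : Fin d → Fin n, (∀ i, lo i ≤ hi i ∧ (hi i : ℕ) ≤ (lo i : ℕ) + 1) ∧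
    Q = {x | ∀ i, lo i ≤ x i ∧ x i ≤ hi i}

/-- `Q` is internally spanned by `A`: the bootstrap closure of `A ∩ Q` is `Q`. -/
def IntSpans (n d : ℕ) (A Q : Set (Fin d → Fin n)) : Prop :=
  bootClosure (gridAdj n d) 2 (A ∩ Q) = Q

/-- A set is constant on the coordinates in `J`. -/
def ConstOn {n d : ℕ} (J : Set (Fin d)) (C : Set (Fin d → Fin n)) : Prop :=
  ∀ i ∈ J, ∀ x ∈ C, ∀ y ∈ C, x i = y i

/-- `C` belongs to `Q⟨J⟩`: `C` is a maximal subcube of `Q` constant on the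
coordinates in `J`. -/
def MaxConstSubcube (n d : ℕ) (Q : Set (Fin d → Fin n)) (J : Set (Fin d))
    (C : Set (Fin d → Fin n)) : Prop :=
  IsCube C ∧ C ⊆ Q ∧ ConstOn J C ∧
    ∀ C', IsCube C' → C' ⊆ Q → ConstOn J C' → C ⊆ C' → C' = C

/-- `{j,k}` is a final pair for `A` in `Q`. -/
def FinalPair (n d : ℕ) (A Q : Set (Fin d → Fin n)) (j k : Fin d) : Prop :=
  IntSpans n d A Q ∧
    ∃ C, MaxConstSubcube n d Q {j, k} C ∧ IntSpans n d A C ∧ (A \ C).ncard = 1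

/-- `{i}` is a final element for `A` in `Q`. -/
def FinalElt (n d : ℕ) (A Q : Set (Fin d → Fin n)) (i : Fin d) : Prop :=
  IntSpans n d A Q ∧
    ∃ C, MaxConstSubcube n d Q {i} C ∧ IntSpans n d A C ∧ (A \ C).ncard = 1

/-- `A` sequentially spans the hypercube `Q` (of dimension `2t`):
`|A| = t+1` and `A` admits an ordering `(a 0, …, a t)` with
`dist (a (j+1), [{a 0,…,a j}]) = 2` for all `j < t`. -/
def SeqSpans (n d : ℕ) (A Q : Set (Fin d → Fin n)) : Prop :=
  ∃ t : ℕ, cubeDim Q = 2 * t ∧ A ⊆ Q ∧ A.ncard = t + 1 ∧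
    bootClosure (gridAdj n d) 2 A = Q ∧
    ∃ a : Fin (t + 1) → (Fin d → Fin n), Function.Injective a ∧ Set.range a = A ∧
      ∀ j : Fin t, gridSetDist n d (a j.succ)
        (bootClosure (gridAdj n d) 2 (a '' {i | (i : ℕ) ≤ (j : ℕ)})) = 2

/-- `{j,k}` is an ending for `A` (in the full cube): some `A' ⊆ A` sequentially
spans one of the maximal subcubes constant on `{j,k}`. -/
def EndingPair (n d : ℕ) (A : Set (Fin d → Fin n)) (j k : Fin d) : Prop :=
  ∃ A', A' ⊆ A ∧ ∃ C, MaxConstSubcube n d Set.univ {j, k} C ∧ SeqSpans n d A' C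

/-- `Δ(b,C)`: the set of directions in which the vertex `b` and the cube `C`
are both constant and differ. -/
def Delta {n d : ℕ} (b : Fin d → Fin n) (C : Set (Fin d → Fin n)) : Set (Fin d) :=
  {i | (∀ x ∈ C, ∀ y ∈ C, x i = y i) ∧ ∀ x ∈ C, x i ≠ b i}

/-- The probability of an event `E` for a random subset `A ~ Bin(V,p)`,
each element included independently with probability `p`. -/
noncomputable def binProb {V : Type*} [Fintype V] (p : ℝ) (E : Finset V → Prop) : ℝ :=
  ∑ A : Finset V,
    Set.indicator {B | E B} (fun B => p ^ B.card * (1 - p) ^ (Fintype.card V - B.card)) A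

/-- The expectation of `f` for a random subset `A ~ Bin(V,p)`. -/
noncomputable def binExp {V : Type*} [Fintype V] (p : ℝ) (f : Finset V → ℝ) : ℝ :=
  ∑ A : Finset V, f A * (p ^ A.card * (1 - p) ^ (Fintype.card V - A.card))

/-- `P(ℓ,p)`: the probability that `A ~ Bin([2]^ℓ,p)` internally spans `[2]^ℓ`. -/
noncomputable def Pprob (ℓ : ℕ) (p : ℝ) : ℝ :=
  binProb p (fun A : Finset (Fin ℓ → Fin 2) =>
    bootClosure (gridAdj 2 ℓ) 2 (↑A : Set (Fin ℓ → Fin 2)) = Set.univ)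

/-- `Q(2ℓ,p)`: the probability that `A ~ Bin([2]^{2ℓ},p)` sequentially
internally spans `[2]^{2ℓ}`. -/
noncomputable def Qprob (ℓ : ℕ) (p : ℝ) : ℝ :=
  binProb p (fun A : Finset (Fin (2 * ℓ) → Fin 2) =>
    SeqSpans 2 (2 * ℓ) (↑A : Set (Fin (2 * ℓ) → Fin 2)) Set.univ)

/-- `|𝒮(ℓ)|`: the number of `(ℓ+1)`-subsets of `[2]^{2ℓ}` which sequentially span it. -/
noncomputable def Scard (ℓ : ℕ) : ℕ :=
  {A : Set (Fin (2 * ℓ) → Fin 2) | SeqSpans 2 (2 * ℓ) A Set.univ}.ncard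

/-- The probability that `A ~ Bin([n]^d,p)` percolates in `r`-neighbour
bootstrap percolation. -/
noncomputable def percProb (n d r : ℕ) (p : ℝ) : ℝ :=
  binProb p (fun A : Finset (Fin d → Fin n) =>
    bootClosure (gridAdj n d) r (↑A : Set (Fin d → Fin n)) = Set.univ)

/-- The critical probability `p_c([n]^d, r)`. -/
noncomputable def pc (n d r : ℕ) : ℝ :=
  sInf {p : ℝ | 0 ≤ p ∧ p ≤ 1 ∧ 1 / 2 ≤ percProb n d r p}

/-- The series `x ↦ ∑_{k≥0} (-1)^k x^k / (2^{k²-k} k!)`, whose smallest positive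
root is `λ ≈ 1.166`. -/
noncomputable def lamSeries (x : ℝ) : ℝ :=
  ∑' k : ℕ, (-1 : ℝ) ^ k * x ^ k / (2 ^ (k ^ 2 - k) * (Nat.factorial k))

/-- `m([2]^d, r)`: the minimum size of a set percolating in `r`-neighbour
bootstrap percolation on the hypercube `[2]^d`. -/
noncomputable def minPercCard (d r : ℕ) : ℕ :=
  sInf {k : ℕ | ∃ A : Finset (Fin d → Fin 2), A.card = k ∧
    bootClosure (gridAdj 2 d) r (↑A : Set (Fin d → Fin 2)) = Set.univ}

/-!
Write `k = r - 1` and identify the vertices of `[2]^d` with the subsets of `Fin d`, adding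
coordinates in the cyclic group `Fin d`. Infect every set of size less than `k`, every `k`-set
`T` containing `-∑ T`, and every zero-sum `(k + 1)`-set. Any other `k`-set `T` then has its `k`
subsets and the zero-sum superset `insert (-∑ T) T` infected, and a larger set has at least
`k + 1` infected subsets one size down, so everything percolates. A `k`-set lies in at most one
zero-sum `(k + 1)`-set, so there are at most `C(d, k) / (k + 1)` of these, while the other two
families have `O(C(d, k - 1)) = o(C(d, k))` members.
-/

open Finset

lemma Nat.choose_le_choose_of_le_half {n i j : ℕ} (hij : i ≤ j) (hj : 2 * j ≤ n) :
    n.choose i ≤ n.choose j := by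
  induction j, hij using Nat.le_induction with
  | base => rfl
  | succ j _ ih => exact (ih (by omega)).trans (Nat.choose_le_succ_of_lt_half_left (by omega))

lemma Nat.choose_pred_mul_mul (n k : ℕ) :
    n.choose (k - 1) * k * (n + 1 - k) = n.choose k * k ^ 2 := by
  cases k with
  | zero => simp
  | succ j =>
    rw [Nat.add_sub_cancel, Nat.add_sub_add_right, mul_right_comm, ← Nat.choose_succ_right_eq]
    ring

lemma choose_pred_mul_le_of_le {ε c : ℝ} (hε : 0 < ε) {n k : ℕ}
    (hn : k + ⌈c * k ^ 2 / ε⌉₊ ≤ n) : c * (n.choose (k - 1) * k) ≤ ε * n.choose k := by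
  have hceil : (⌈c * k ^ 2 / ε⌉₊ : ℝ) + 1 ≤ (n + 1 - k : ℕ) := by
    exact_mod_cast (by omega : ⌈c * k ^ 2 / ε⌉₊ + 1 ≤ n + 1 - k)
  have hpos : (0 : ℝ) < (n + 1 - k : ℕ) := by
    linarith [Nat.cast_nonneg (α := ℝ) ⌈c * k ^ 2 / ε⌉₊]
  have hck : c * k ^ 2 ≤ ε * (n + 1 - k : ℕ) := by
    rw [← div_le_iff₀' hε]
    linarith [Nat.le_ceil (c * k ^ 2 / ε)]
  have hid : (n.choose (k - 1) * k : ℝ) * (n + 1 - k : ℕ) = n.choose k * k ^ 2 := by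
    exact_mod_cast Nat.choose_pred_mul_mul n k
  refine le_of_mul_le_mul_right ?_ hpos
  calc c * (n.choose (k - 1) * k) * (n + 1 - k : ℕ) = c * k ^ 2 * n.choose k := by
        rw [mul_assoc, hid]; ring
    _ ≤ ε * (n + 1 - k : ℕ) * n.choose k := by gcongr
    _ = ε * n.choose k * (n + 1 - k : ℕ) := by ring

section Bootstrap

variable {V : Type*} {adj : V → V → Prop} {r : ℕ} {A : Set V}

lemma monotone_iterate_bootStep (adj : V → V → Prop) (r : ℕ) (A : Set V) :
    Monotone fun t => (bootStep adj r)^[t] A :=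
  monotone_nat_of_le_succ fun t => by
    rw [Function.iterate_succ_apply']
    exact Set.subset_union_left

lemma subset_bootClosure : A ⊆ bootClosure adj r A :=
  fun _ hv => Set.mem_iUnion.2 ⟨0, hv⟩

lemma mem_bootClosure_of_le_card [Finite V] {v : V} (s : Finset V) (hs : r ≤ #s)
    (h : ∀ u ∈ s, adj v u ∧ u ∈ bootClosure adj r A) : v ∈ bootClosure adj r A := by
  choose! t ht using fun u hu => Set.mem_iUnion.1 (h u hu).2
  refine Set.mem_iUnion.2 ⟨s.sup t + 1, ?_⟩
  rw [Function.iterate_succ_apply']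
  refine Set.mem_union_right _ (hs.trans ?_)
  rw [← Set.ncard_coe_finset]
  exact Set.ncard_le_ncard fun u hu =>
    ⟨(h u hu).1, monotone_iterate_bootStep adj r A (le_sup hu) (ht u hu)⟩

end Bootstrap

section Hypercube

variable {d : ℕ}

def cubeVertex (S : Finset (Fin d)) : Fin d → Fin 2 := fun i => if i ∈ S then 1 else 0

lemma cubeVertex_injective : Function.Injective (cubeVertex (d := d)) := by
  intro S T h
  ext i
  have hi := congrFun h i
  by_cases hS : i ∈ S <;> by_cases hT : i ∈ T <;> simp_all [cubeVertex]

lemma cubeVertex_surjective : Function.Surjective (cubeVertex (d := d)) := fun v =>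
  ⟨univ.filter (v · = 1), funext fun i => by
    by_cases h : v i = 1 <;> simp [cubeVertex, h]
    omega⟩

lemma gridAdj_cubeVertex_insert {S : Finset (Fin d)} {x : Fin d} (hx : x ∉ S) :
    gridAdj 2 d (cubeVertex S) (cubeVertex (insert x S)) := by
  refine ⟨x, Or.inl (by simp [cubeVertex, hx]), fun j hj => ?_⟩
  simp [cubeVertex, hj]

lemma gridAdj_cubeVertex_erase {S : Finset (Fin d)} {x : Fin d} (hx : x ∈ S) :
    gridAdj 2 d (cubeVertex S) (cubeVertex (S.erase x)) := by
  have h := gridAdj_cubeVertex_insert (notMem_erase x S)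
  rw [insert_erase hx] at h
  exact (gridGraph 2 d).adj_symm h

theorem bootClosure_image_cubeVertex_eq_univ {k : ℕ} {𝒜 : Finset (Finset (Fin d))}
    (hlow : ∀ S : Finset (Fin d), #S < k → S ∈ 𝒜)
    (hup : ∀ S : Finset (Fin d), #S = k → S ∉ 𝒜 → ∃ x ∉ S, insert x S ∈ 𝒜) :
    bootClosure (gridAdj 2 d) (k + 1) ↑(𝒜.image cubeVertex) = Set.univ := by
  refine Set.eq_univ_of_forall fun v => ?_
  obtain ⟨S, rfl⟩ := cubeVertex_surjective v
  induction S using Finset.strongInduction with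
  | H S ih =>
  have seed : ∀ {T}, T ∈ 𝒜 →
      cubeVertex T ∈ bootClosure (gridAdj 2 d) (k + 1) ↑(𝒜.image cubeVertex) :=
    fun hT => subset_bootClosure (mem_coe.2 (mem_image_of_mem _ hT))
  by_cases hS : S ∈ 𝒜
  · exact seed hS
  set down := S.image fun x => cubeVertex (S.erase x)
  have hdown : ∀ u ∈ down, gridAdj 2 d (cubeVertex S) u ∧
      u ∈ bootClosure (gridAdj 2 d) (k + 1) ↑(𝒜.image cubeVertex) := by
    simp only [down, mem_image]
    rintro _ ⟨x, hx, rfl⟩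
    exact ⟨gridAdj_cubeVertex_erase hx, ih _ (erase_ssubset hx)⟩
  have hcard : #down = #S :=
    card_image_of_injOn (cubeVertex_injective.comp_injOn S.erase_injOn)
  rcases (not_lt.1 (mt (hlow S) hS)).eq_or_lt with hk | hk
  · obtain ⟨x, hx, hxS⟩ := hup S hk.symm hS
    have hnew : cubeVertex (insert x S) ∉ down := by
      simp only [down, mem_image, not_exists, not_and]
      intro y _ h
      have hxy := (cubeVertex_injective h).symm ▸ mem_insert_self x S
      exact hx (mem_of_mem_erase hxy)
    refine mem_bootClosure_of_le_card (insert (cubeVertex (insert x S)) down)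
      (by rw [card_insert_of_notMem hnew, hcard, hk]) fun u hu => ?_
    rcases mem_insert.1 hu with rfl | hu
    · exact ⟨gridAdj_cubeVertex_insert hx, seed hxS⟩
    · exact hdown u hu
  · exact mem_bootClosure_of_le_card down (by omega) hdown

end Hypercube

section Design

variable (d k : ℕ)

def lowSets : Finset (Finset (Fin d)) := univ.filter fun S => #S < k

lemma card_lowSets_le (h : 2 * k ≤ d) : #(lowSets d k) ≤ d.choose (k - 1) * k := by
  have hmaps : ∀ S ∈ lowSets d k, #S ∈ range k := fun S hS => by
    simpa [lowSets] using hS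
  refine (card_le_mul_card_image_of_maps_to hmaps _ fun i hi => ?_).trans_eq
    (by rw [card_range])
  calc #{S ∈ lowSets d k | #S = i} ≤ #(powersetCard i (univ : Finset (Fin d))) :=
        card_le_card fun S hS => by simp_all
    _ = d.choose i := by simp
    _ ≤ d.choose (k - 1) := Nat.choose_le_choose_of_le_half (by simp at hi; omega) (by omega)

variable [NeZero d]

def badSets : Finset (Finset (Fin d)) :=
  (powersetCard k univ).filter fun T => -∑ i ∈ T, i ∈ T

def zeroSumSets : Finset (Finset (Fin d)) :=
  (powersetCard (k + 1) univ).filter fun S => ∑ i ∈ S, i = 0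

variable {d k}

lemma eq_insert_neg_sum_of_sum_eq_zero {T S : Finset (Fin d)} (hTS : T ⊆ S)
    (hcard : #T + 1 = #S) (hS : ∑ i ∈ S, i = 0) : S = insert (-∑ i ∈ T, i) T := by
  obtain ⟨x, hx, rfl⟩ := exists_eq_insert_iff.2 ⟨hTS, hcard⟩
  rw [sum_insert hx, add_eq_zero_iff_eq_neg] at hS
  rw [hS]

lemma insert_neg_sum_mem_zeroSumSets {T : Finset (Fin d)} (hT : #T = k)
    (hx : -∑ i ∈ T, i ∉ T) : insert (-∑ i ∈ T, i) T ∈ zeroSumSets d k := by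
  simp [zeroSumSets, card_insert_of_notMem hx, hT, sum_insert hx]

variable (d k)

lemma card_zeroSumSets_mul_le : #(zeroSumSets d k) * (k + 1) ≤ d.choose k := by
  have key := card_mul_le_card_mul (s := zeroSumSets d k) (t := powersetCard k univ)
    (fun S T => T ⊆ S) (m := k + 1) (n := 1) (fun S hS => ?_) (fun T hT => ?_)
  · simpa using key
  · have hS' := (mem_powersetCard.1 (mem_filter.1 hS).1).2
    have : (powersetCard k univ).bipartiteAbove (fun S T => T ⊆ S) S = powersetCard k S := by
      ext T
      simp [bipartiteAbove, mem_powersetCard, and_comm]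
    rw [this, card_powersetCard, hS', Nat.choose_succ_self_right]
  · rw [card_le_one]
    intro S hS S' hS'
    simp only [bipartiteBelow, zeroSumSets, mem_filter, mem_powersetCard] at hS hS' hT
    rw [eq_insert_neg_sum_of_sum_eq_zero hS.2 (by omega) hS.1.2,
      eq_insert_neg_sum_of_sum_eq_zero hS'.2 (by omega) hS'.1.2]

lemma card_filter_add_self_eq_le_two (c : Fin d) : #{x | x + x = c} ≤ 2 := by
  have hquot : ∀ x : Fin d, x + x = c → (x : ℕ) + x = c + d * ((x + x : ℕ) / d) := by
    intro x hx
    rw [← hx, Fin.val_add, Nat.mod_add_div]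
  refine (card_le_card_of_injOn (fun x : Fin d => ((x : ℕ) + x) / d) (t := range 2)
    (fun x _ => ?_) fun x hx y hy hxy => ?_).trans_eq (card_range 2)
  · have := x.isLt
    simp only [coe_range, Set.mem_Iio]
    rw [Nat.div_lt_iff_lt_mul (NeZero.pos d)]
    omega
  · simp only [coe_filter, mem_univ, true_and, Set.mem_ofPred_eq] at hx hy hxy
    have hx' := hquot x hx
    rw [hxy] at hx'
    exact Fin.ext (by linarith [hquot y hy])

variable {d k} in
lemma eq_insert_neg_sum_of_mem_badSets {T : Finset (Fin d)} (hT : T ∈ badSets d k) :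
    T = insert (-∑ i ∈ T, i) (T.erase (-∑ i ∈ T, i)) :=
  (insert_erase (mem_filter.1 hT).2).symm

lemma card_badSets_le : #(badSets d k) ≤ 2 * #(lowSets d k) := by
  refine card_le_mul_card_image_of_maps_to (f := fun T => T.erase (-∑ i ∈ T, i))
    (fun T hT => ?_) 2 fun U _ => ?_
  · obtain ⟨hTk, hmem⟩ := mem_filter.1 hT
    have := card_pos.2 ⟨_, hmem⟩
    simp only [lowSets, mem_filter, mem_univ, true_and, card_erase_of_mem hmem]
    rw [(mem_powersetCard.1 hTk).2] at this ⊢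
    omega
  -- A bad set over `U` is `insert x U` with `x + x = -∑ U`, so `x` determines it.
  refine (card_le_card_of_injOn (fun T => -∑ i ∈ T, i) (t := {x | x + x = -∑ i ∈ U, i})
    (fun T hT => ?_) fun T hT T' hT' h => ?_).trans (card_filter_add_self_eq_le_two d _)
  · obtain ⟨hbad, rfl⟩ := mem_filter.1 hT
    have hsum := congrArg (fun S => ∑ i ∈ S, i) (eq_insert_neg_sum_of_mem_badSets hbad)
    simp only [sum_insert (notMem_erase _ _)] at hsum
    rw [eq_neg_add_iff_add_eq] at hsum
    simp only [coe_filter, mem_univ, true_and, Set.mem_ofPred_eq, ← hsum, neg_add]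
  · obtain ⟨hbad, rfl⟩ := mem_filter.1 hT
    obtain ⟨hbad', hU⟩ := mem_filter.1 hT'
    simp only at h hU
    rw [eq_insert_neg_sum_of_mem_badSets hbad, eq_insert_neg_sum_of_mem_badSets hbad', hU, h]

def seedSets : Finset (Finset (Fin d)) := lowSets d k ∪ badSets d k ∪ zeroSumSets d k

lemma bootClosure_seedSets_eq_univ :
    bootClosure (gridAdj 2 d) (k + 1) ↑((seedSets d k).image cubeVertex) = Set.univ := by
  refine bootClosure_image_cubeVertex_eq_univ (fun S hS => ?_) fun T hT hseed => ?_
  · simp [seedSets, lowSets, hS]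
  have hgood : -∑ i ∈ T, i ∉ T := fun h =>
    hseed (by simp [seedSets, badSets, hT, h])
  exact ⟨_, hgood, by simp [seedSets, insert_neg_sum_mem_zeroSumSets hT hgood]⟩

lemma card_seedSets_le : #(seedSets d k) ≤ #(zeroSumSets d k) + 3 * #(lowSets d k) := by
  have := card_badSets_le d k
  have := card_union_le (lowSets d k ∪ badSets d k) (zeroSumSets d k)
  have := card_union_le (lowSets d k) (badSets d k)
  rw [seedSets]
  omega

end Design

theorem succ_mul_minPercCard_le (d k : ℕ) [NeZero d] (h : 2 * k ≤ d) :
    (k + 1) * minPercCard d (k + 1) ≤ d.choose k + 3 * (k + 1) * (d.choose (k - 1) * k) := by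
  have hperc : minPercCard d (k + 1) ≤ #((seedSets d k).image cubeVertex) :=
    Nat.sInf_le ⟨_, rfl, bootClosure_seedSets_eq_univ d k⟩
  have hmin := hperc.trans card_image_le
  calc (k + 1) * minPercCard d (k + 1)
      ≤ (k + 1) * (#(zeroSumSets d k) + 3 * #(lowSets d k)) :=
        Nat.mul_le_mul_left _ (hmin.trans (card_seedSets_le d k))
    _ ≤ d.choose k + 3 * (k + 1) * (d.choose (k - 1) * k) := by
        nlinarith [card_zeroSumSets_mul_le d k, card_lowSets_le d k h]

/-- `m([2]^d,r) ≤ (1+o(1)) (1/r) C(d,r-1)` as `d → ∞`. -/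
theorem minPercCard_upper (r : ℕ) (hr : 1 ≤ r) :
    ∀ ε : ℝ, 0 < ε → ∃ d₀ : ℕ, ∀ d : ℕ, d₀ ≤ d →
      (minPercCard d r : ℝ) ≤ (1 + ε) * (1 / (r : ℝ)) * (d.choose (r - 1) : ℝ) := by
  intro ε hε
  obtain ⟨k, rfl⟩ : ∃ k, r = k + 1 := ⟨r - 1, by omega⟩
  refine ⟨2 * k + 1 + ⌈3 * (k + 1) * k ^ 2 / ε⌉₊, fun d hd => ?_⟩
  have : NeZero d := ⟨by omega⟩
  have hmain : ((k + 1) * minPercCard d (k + 1) : ℝ) ≤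
      d.choose k + 3 * (k + 1) * (d.choose (k - 1) * k) := by
    exact_mod_cast succ_mul_minPercCard_le d k (by omega)
  have herr := choose_pred_mul_le_of_le (c := 3 * (k + 1)) hε (n := d) (k := k) (by omega)
  simp only [Nat.add_sub_cancel, Nat.cast_add, Nat.cast_one]
  rw [mul_one_div, div_mul_eq_mul_div, le_div_iff₀ (by positivity)]
  linarith
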